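/- Suppose K is algebraically closed of characteristic zero. Then V is not a set-theoretic complete intersection on binomials: there do not exist n binomials B₁, …, Bₙ in K[x₁,…,xₙ,y₁,…,yₙ] such that the zero set in K^{2n} of ker φ equals the set of common zeros of B₁, …, Bₙ. -/

import Mathlib

open MvPolynomial

/-- A binomial: the difference of two distinct monic monomials. -/
def IsBinomial {σ : Type*} {K : Type*} [CommRing K] (F : MvPolynomial σ K) : Prop :=
  ∃ a b : σ →₀ ℕ, a ≠ b ∧ F = monomial a (1 : K) - monomial b (1 : K)

namespace SCI

open Finset


/-! ### Generic helper lemmas -/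

variable {K : Type*} [Field K]

/-- Coefficient extraction for equal binomials. -/
lemma binom_eq_binom [CharZero K] {σ : Type*} {s t s' t' : σ →₀ ℕ}
    (h : (monomial s (1:K)) - monomial t 1 = monomial s' 1 - monomial t' 1)
    (hst : s ≠ t) : s = s' ∧ t = t' := by
  classical
  have h1 := congrArg (MvPolynomial.coeff s) h
  rw [coeff_sub, coeff_sub, coeff_monomial, coeff_monomial, coeff_monomial,
    coeff_monomial] at h1
  have hts : ¬ t = s := fun hh => hst hh.symm
  rw [if_pos rfl, if_neg hts] at h1
  by_cases hs : s' = s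
  · subst hs
    by_cases ht' : t' = s'
    · rw [if_pos rfl, if_pos ht'] at h1; norm_num at h1
    · refine ⟨rfl, ?_⟩
      have h2 : (monomial t (1:K)) = monomial t' 1 := by linear_combination -h
      exact monomial_left_injective one_ne_zero h2
  · rw [if_neg hs] at h1
    by_cases ht' : t' = s
    · rw [if_pos ht'] at h1; norm_num at h1
    · rw [if_neg ht'] at h1; norm_num at h1

/-- Product of monomials with coefficient 1. -/
lemma prod_monomial_one {σ ι : Type*} (s : Finset ι) (t : ι → (σ →₀ ℕ)) :
    (∏ i ∈ s, monomial (t i) (1:K)) = monomial (∑ i ∈ s, t i) 1 := by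
  classical
  induction s using Finset.induction_on with
  | empty => simp [monomial_zero']
  | @insert _ _ hni ih =>
      rw [Finset.prod_insert hni, Finset.sum_insert hni, ih, monomial_mul, one_mul]

lemma aeval_eq_eval' {σ : Type*} (x : σ → K) (p : MvPolynomial σ K) :
    (MvPolynomial.aeval x) p = eval x p := by
  rw [aeval_def, Algebra.algebraMap_self]
  rfl

lemma eval_monomial_indicator {σ : Type*} [DecidableEq σ] (w : σ) (b : σ →₀ ℕ) :
    eval (fun v => if v = w then (1:K) else 0) (monomial b (1:K))
      = if b.support ⊆ {w} then 1 else 0 := by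
  classical
  rw [eval_monomial, one_mul]
  by_cases hs : b.support ⊆ {w}
  · rw [if_pos hs]
    apply Finset.prod_eq_one
    intro v hv
    have hvw : v = w := by simpa using hs hv
    simp [hvw]
  · rw [if_neg hs]
    obtain ⟨v, hv, hvw⟩ : ∃ v ∈ b.support, v ≠ w := by
      by_contra hc
      push_neg at hc
      exact hs fun v hv => by simp [hc v hv]
    refine Finset.prod_eq_zero hv ?_
    have hbv := Finsupp.mem_support_iff.mp hv
    simp [hvw, zero_pow hbv]

lemma eval_monomial_zeta {σ : Type*} [DecidableEq σ] (ζ : K) (w : σ) (b : σ →₀ ℕ) :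
    eval (fun v => if v = w then ζ else 1) (monomial b (1:K)) = ζ ^ (b w) := by
  classical
  rw [eval_monomial, one_mul, Finsupp.prod]
  have hcongr : ∀ v ∈ b.support, (if v = w then ζ else 1) ^ (b v)
      = if v = w then ζ ^ (b v) else 1 := by
    intro v _
    split <;> simp
  rw [Finset.prod_congr rfl hcongr, Finset.prod_ite_eq' b.support w (fun v => ζ ^ (b v))]
  by_cases hw : w ∈ b.support
  · rw [if_pos hw]
  · rw [if_neg hw, Finsupp.notMem_support_iff.mp hw, pow_zero]

/-! ### The exponent map -/

section Ecoord

variable (n f g d : ℕ) (m : Fin n)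

/-- The image exponent vector of a monomial exponent `b` under the monomial map. -/
def Ecoord (b : (Fin n ⊕ Fin n) →₀ ℕ) (j : Fin n) : ℕ :=
  b (Sum.inl j) * (f * g) +
    (if j = m then (∑ i ∈ univ.erase m, b (Sum.inr i)) * (f - g) + b (Sum.inr m) * (g * d)
     else b (Sum.inr j) * (f - g) + b (Sum.inr m) * g ^ 2)

lemma Ecoord_add (b₁ b₂ : (Fin n ⊕ Fin n) →₀ ℕ) (j : Fin n) :
    Ecoord n f g d m (b₁ + b₂) j = Ecoord n f g d m b₁ j + Ecoord n f g d m b₂ j := by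
  simp only [Ecoord, Finsupp.add_apply]
  split <;> simp [Finset.sum_add_distrib, add_mul] <;> ring

lemma Ecoord_single_inl (i : Fin n) (k : ℕ) (j : Fin n) :
    Ecoord n f g d m (Finsupp.single (Sum.inl i) k) j = if i = j then k * (f * g) else 0 := by
  classical
  simp only [Ecoord, Finsupp.single_apply, reduceCtorEq, if_false, Sum.inl.injEq,
    Finset.sum_const_zero, zero_mul, mul_zero, add_zero, zero_add]
  split_ifs with h1 h2 h2 <;> simp

lemma Ecoord_single_inr_of_ne (j₀ : Fin n) (hj₀ : j₀ ≠ m) (l : ℕ) (j : Fin n) :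
    Ecoord n f g d m (Finsupp.single (Sum.inr j₀) l) j =
      if j = m ∨ j₀ = j then l * (f - g) else 0 := by
  classical
  simp only [Ecoord, Finsupp.single_apply, reduceCtorEq, if_false, Sum.inr.injEq,
    zero_mul, zero_add]
  rw [Finset.sum_ite_eq]
  simp only [Finset.mem_erase, Finset.mem_univ, and_true, hj₀, not_false_iff, if_true]
  by_cases hjm : j = m
  · subst hjm
    simp [hj₀]
  · by_cases hjj : j₀ = j
    · subst hjj
      simp [hjm, hj₀]
    · simp [hjm, hjj]

lemma Ecoord_single_inrm (k : ℕ) (j : Fin n) :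
    Ecoord n f g d m (Finsupp.single (Sum.inr m) k) j =
      if j = m then k * (g * d) else k * g ^ 2 := by
  classical
  simp only [Ecoord, Finsupp.single_apply, reduceCtorEq, if_false, Sum.inr.injEq,
    zero_mul, zero_add]
  rw [Finset.sum_ite_eq]
  simp only [Finset.mem_erase, Finset.mem_univ, and_true, ne_eq, not_true_eq_false,
    false_and, if_false]
  by_cases hjm : j = m
  · subst hjm
    simp
  · simp [hjm, (Ne.symm hjm : m ≠ j)]

lemma Ecoord_apply_ne (b : (Fin n ⊕ Fin n) →₀ ℕ) {j : Fin n} (hj : j ≠ m) :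
    Ecoord n f g d m b j
      = b (Sum.inl j) * (f * g) + (b (Sum.inr j) * (f - g) + b (Sum.inr m) * g ^ 2) := by
  simp [Ecoord, hj]

lemma Ecoord_apply_m (b : (Fin n ⊕ Fin n) →₀ ℕ) :
    Ecoord n f g d m b m = b (Sum.inl m) * (f * g) +
      ((∑ i ∈ univ.erase m, b (Sum.inr i)) * (f - g) + b (Sum.inr m) * (g * d)) := by
  simp [Ecoord]

variable {n f g d m}

lemma eq_zero_of_Ecoord (hg : 0 < g) (hgf : g < f) {j0 : Fin n} (hj0 : j0 ≠ m)
    {b : (Fin n ⊕ Fin n) →₀ ℕ} (h : ∀ j, Ecoord n f g d m b j = 0) : b = 0 := by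
  have hfg : f * g ≠ 0 := Nat.mul_ne_zero (by omega) hg.ne'
  have hfmg : f - g ≠ 0 := Nat.sub_ne_zero_of_lt hgf
  have hg2 : g ^ 2 ≠ 0 := pow_ne_zero _ hg.ne'
  have hm0 : b (Sum.inr m) = 0 := by
    have h0 := h j0
    rw [Ecoord_apply_ne n f g d m b hj0] at h0
    rcases Nat.add_eq_zero.mp h0 with ⟨_, h2⟩
    rcases Nat.add_eq_zero.mp h2 with ⟨_, h4⟩
    exact (Nat.mul_eq_zero.mp h4).resolve_right hg2
  ext v
  rcases v with i | i
  · by_cases him : i = m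
    · have h0 := h m
      rw [Ecoord_apply_m] at h0
      rcases Nat.add_eq_zero.mp h0 with ⟨h1, _⟩
      have hbm : b (Sum.inl m) = 0 := (Nat.mul_eq_zero.mp h1).resolve_right hfg
      rw [him]; simpa using hbm
    · have h0 := h i
      rw [Ecoord_apply_ne n f g d m b him] at h0
      rcases Nat.add_eq_zero.mp h0 with ⟨h1, _⟩
      simpa using (Nat.mul_eq_zero.mp h1).resolve_right hfg
  · by_cases him : i = m
    · rw [him]; simpa using hm0
    · have h0 := h i
      rw [Ecoord_apply_ne n f g d m b him] at h0
      rcases Nat.add_eq_zero.mp h0 with ⟨_, h2⟩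
      rcases Nat.add_eq_zero.mp h2 with ⟨h3, _⟩
      simpa using (Nat.mul_eq_zero.mp h3).resolve_right hfmg

lemma cross_impossible (hg : 0 < g) (hgf : g < f) {j j' : Fin n} (hjj' : j ≠ j')
    {l l' : ℕ} (hl : l ≠ 0) (hl' : l' ≠ 0)
    (hex : ∀ a : Fin n, ∃ j'', j'' ≠ m ∧ j'' ≠ a)
    (h : ∀ t, Ecoord n f g d m (Finsupp.single (Sum.inr j) l) t
        = Ecoord n f g d m (Finsupp.single (Sum.inr j') l') t) : False := by
  have hfmg : f - g ≠ 0 := Nat.sub_ne_zero_of_lt hgf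
  have hg2 : g ^ 2 ≠ 0 := pow_ne_zero _ hg.ne'
  by_cases hjm : j = m
  · have hj'm : j' ≠ m := fun hh => hjj' (hjm.trans hh.symm)
    obtain ⟨j'', hj''m, hj''j'⟩ := hex j'
    have hc := h j''
    rw [hjm] at hc
    rw [Ecoord_single_inrm, Ecoord_single_inr_of_ne n f g d m j' hj'm] at hc
    rw [if_neg hj''m, if_neg (by rintro (hh | hh); exacts [hj''m hh, hj''j' hh.symm])] at hc
    exact (Nat.mul_ne_zero hl hg2) hc
  · by_cases hj'm : j' = m
    · obtain ⟨j'', hj''m, hj''j⟩ := hex j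
      have hc := h j''
      rw [hj'm] at hc
      rw [Ecoord_single_inr_of_ne n f g d m j hjm, Ecoord_single_inrm] at hc
      rw [if_neg (by rintro (hh | hh); exacts [hj''m hh, hj''j hh.symm]), if_neg hj''m] at hc
      exact (Nat.mul_ne_zero hl' hg2) hc.symm
    · have hc := h j
      rw [Ecoord_single_inr_of_ne n f g d m j hjm,
        Ecoord_single_inr_of_ne n f g d m j' hj'm] at hc
      rw [if_pos (Or.inr rfl), if_neg (by rintro (hh | hh); exacts [hjm hh, hjj' hh.symm])] at hc
      exact (Nat.mul_ne_zero hl hfmg) hc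

lemma inrm_eq_zero_of (hg : 0 < g) {j : Fin n} (hj : j ≠ m)
    (hex : ∀ a : Fin n, ∃ j'', j'' ≠ m ∧ j'' ≠ a)
    (l : ℕ) (b : (Fin n ⊕ Fin n) →₀ ℕ)
    (h : ∀ t, Ecoord n f g d m (Finsupp.single (Sum.inr j) l) t = Ecoord n f g d m b t) :
    b (Sum.inr m) = 0 := by
  obtain ⟨j'', hj''m, hj''j⟩ := hex j
  have hc := h j''
  rw [Ecoord_single_inr_of_ne n f g d m j hj,
    if_neg (by rintro (hh | hh); exacts [hj''m hh, hj''j hh.symm]),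
    Ecoord_apply_ne n f g d m b hj''m] at hc
  rcases Nat.add_eq_zero.mp hc.symm with ⟨_, h2⟩
  rcases Nat.add_eq_zero.mp h2 with ⟨_, h4⟩
  exact (Nat.mul_eq_zero.mp h4).resolve_right (pow_ne_zero _ hg.ne')

lemma lt_of_m_binomial (hg : 0 < g) (hgf : g < f) {j0 : Fin n} (hj0 : j0 ≠ m) {k : ℕ}
    (b : (Fin n ⊕ Fin n) →₀ ℕ) (hbne : b ≠ Finsupp.single (Sum.inr m) k)
    (h : ∀ t, Ecoord n f g d m (Finsupp.single (Sum.inr m) k) t = Ecoord n f g d m b t) :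
    b (Sum.inr m) < k := by
  by_contra hge
  push_neg at hge
  have hfg : f * g ≠ 0 := Nat.mul_ne_zero (by omega) hg.ne'
  have hfmg : f - g ≠ 0 := Nat.sub_ne_zero_of_lt hgf
  have hg2 : (0:ℕ) < g ^ 2 := by positivity
  have key : ∀ j, j ≠ m → b (Sum.inl j) = 0 ∧ b (Sum.inr j) = 0 ∧ b (Sum.inr m) = k := by
    intro j hj
    have hh := h j
    rw [Ecoord_single_inrm, if_neg hj, Ecoord_apply_ne n f g d m b hj] at hh
    have hle : k * g ^ 2 ≤ b (Sum.inr m) * g ^ 2 := Nat.mul_le_mul_right _ hge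
    have hXz : b (Sum.inl j) * (f * g) = 0 := by omega
    have hYz : b (Sum.inr j) * (f - g) = 0 := by omega
    have hcz : b (Sum.inr m) * g ^ 2 = k * g ^ 2 := by omega
    exact ⟨(Nat.mul_eq_zero.mp hXz).resolve_right hfg,
      (Nat.mul_eq_zero.mp hYz).resolve_right hfmg,
      Nat.eq_of_mul_eq_mul_right hg2 hcz⟩
  have hsum : ∑ i ∈ univ.erase m, b (Sum.inr i) = 0 :=
    Finset.sum_eq_zero fun i hi => (key i (Finset.mem_erase.mp hi).1).2.1
  have hbm : b (Sum.inr m) = k := (key j0 hj0).2.2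
  have hh := h m
  rw [Ecoord_single_inrm, if_pos rfl, Ecoord_apply_m, hsum, hbm] at hh
  have hXm : b (Sum.inl m) * (f * g) = 0 := by omega
  have hXm0 : b (Sum.inl m) = 0 := (Nat.mul_eq_zero.mp hXm).resolve_right hfg
  apply hbne
  ext v
  rcases v with i | i
  · rw [Finsupp.single_apply, if_neg (by simp)]
    by_cases him : i = m
    · rw [him]; exact hXm0
    · exact (key i him).1
  · by_cases him : i = m
    · rw [him, Finsupp.single_eq_same]; exact hbm
    · rw [Finsupp.single_apply, if_neg (by simp [Ne.symm him])]
      exact (key i him).2.1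

end Ecoord

/-! ### The image of a monomial under φ -/

section Phi

variable {n f g d : ℕ} {m : Fin n}
variable (φ : MvPolynomial (Fin n ⊕ Fin n) K →ₐ[K] MvPolynomial (Fin n) K)

lemma phi_monomial_single
    (hx : ∀ i, φ (X (Sum.inl i)) = X i ^ (f * g))
    (hy : ∀ j, j ≠ m → φ (X (Sum.inr j)) = X j ^ (f - g) * X m ^ (f - g))
    (hym : φ (X (Sum.inr m)) = (∏ j ∈ univ.erase m, X j ^ g ^ 2) * X m ^ (g * d))
    (v : Fin n ⊕ Fin n) (k : ℕ) :
    φ (monomial (Finsupp.single v k) 1)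
      = monomial (Finsupp.equivFunOnFinite.symm (Ecoord n f g d m (Finsupp.single v k))) 1 := by
  classical
  rw [← X_pow_eq_monomial, map_pow]
  rcases v with i | i
  · rw [hx i, ← pow_mul, X_pow_eq_monomial]
    have hfe : Finsupp.equivFunOnFinite.symm (Ecoord n f g d m (Finsupp.single (Sum.inl i) k))
        = Finsupp.single i (f * g * k) := by
      ext j
      rw [Finsupp.coe_equivFunOnFinite_symm, Ecoord_single_inl, Finsupp.single_apply]
      split_ifs with hh
      · ring
      · rfl
    rw [hfe]
  · by_cases him : i = m
    · rw [him]
      rw [hym, mul_pow, ← pow_mul, ← Finset.prod_pow]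
      have hprod : ∀ j ∈ univ.erase m, (X j ^ g ^ 2 : MvPolynomial (Fin n) K) ^ k
          = monomial (Finsupp.single j (g ^ 2 * k)) 1 := by
        intro j _
        rw [← pow_mul, X_pow_eq_monomial]
      rw [Finset.prod_congr rfl hprod, prod_monomial_one, X_pow_eq_monomial, monomial_mul,
        one_mul]
      have hfe : Finsupp.equivFunOnFinite.symm
            (Ecoord n f g d m (Finsupp.single (Sum.inr m) k))
          = (∑ j ∈ univ.erase m, Finsupp.single j (g ^ 2 * k)) + Finsupp.single m (g * d * k) := by
        ext j
        rw [Finsupp.coe_equivFunOnFinite_symm, Ecoord_single_inrm, Finsupp.add_apply,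
          Finsupp.finset_sum_apply]
        by_cases hjm : j = m
        · rw [if_pos hjm, hjm, Finsupp.single_eq_same]
          have hz : ∀ j' ∈ univ.erase m, (Finsupp.single j' (g ^ 2 * k) : Fin n →₀ ℕ) m = 0 := by
            intro j' hj'
            exact Finsupp.single_eq_of_ne' (Finset.mem_erase.mp hj').1
          rw [Finset.sum_eq_zero hz]
          ring
        · rw [if_neg hjm, Finsupp.single_apply, if_neg (fun hh : m = j => hjm hh.symm)]
          have hz : ∀ j' ∈ univ.erase m, (Finsupp.single j' (g ^ 2 * k) : Fin n →₀ ℕ) j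
              = if j' = j then g ^ 2 * k else 0 := fun j' _ => Finsupp.single_apply
          rw [Finset.sum_congr rfl hz, Finset.sum_ite_eq' (univ.erase m) j fun _ => g ^ 2 * k]
          rw [if_pos (Finset.mem_erase.mpr ⟨hjm, Finset.mem_univ j⟩)]
          ring
      rw [hfe]
    · rw [hy i him, mul_pow, ← pow_mul, ← pow_mul, X_pow_eq_monomial, X_pow_eq_monomial,
        monomial_mul, one_mul]
      have hfe : Finsupp.equivFunOnFinite.symm
            (Ecoord n f g d m (Finsupp.single (Sum.inr i) k))
          = Finsupp.single i ((f - g) * k) + Finsupp.single m ((f - g) * k) := by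
        ext j
        rw [Finsupp.coe_equivFunOnFinite_symm, Ecoord_single_inr_of_ne n f g d m i him,
          Finsupp.add_apply, Finsupp.single_apply, Finsupp.single_apply]
        by_cases hjm : j = m
        · rw [if_pos (Or.inl hjm), if_neg (fun hh : i = j => him (hh.trans hjm)), hjm,
            if_pos rfl]
          ring
        · by_cases hij : i = j
          · rw [if_pos (Or.inr hij), if_pos hij, if_neg (fun hh : m = j => hjm hh.symm)]
            ring
          · rw [if_neg (by rintro (hh | hh); exacts [hjm hh, hij hh]), if_neg hij,
              if_neg (fun hh : m = j => hjm hh.symm)]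
            rfl
      rw [hfe]

lemma phi_monomial
    (hx : ∀ i, φ (X (Sum.inl i)) = X i ^ (f * g))
    (hy : ∀ j, j ≠ m → φ (X (Sum.inr j)) = X j ^ (f - g) * X m ^ (f - g))
    (hym : φ (X (Sum.inr m)) = (∏ j ∈ univ.erase m, X j ^ g ^ 2) * X m ^ (g * d))
    (b : (Fin n ⊕ Fin n) →₀ ℕ) :
    φ (monomial b 1)
      = monomial (Finsupp.equivFunOnFinite.symm (Ecoord n f g d m b)) 1 := by
  classical
  induction b using Finsupp.induction with
  | zero =>
      have h0 : Finsupp.equivFunOnFinite.symm (Ecoord n f g d m 0) = 0 := by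
        ext j
        rw [Finsupp.coe_equivFunOnFinite_symm]
        simp [Ecoord]
      rw [h0]
      simp [monomial_zero']
  | single_add v k b hvb hk ih =>
      have hsplit : (monomial (Finsupp.single v k + b) (1:K))
          = monomial (Finsupp.single v k) 1 * monomial b 1 := by
        rw [monomial_mul, one_mul]
      have hEadd : Finsupp.equivFunOnFinite.symm (Ecoord n f g d m (Finsupp.single v k + b))
          = Finsupp.equivFunOnFinite.symm (Ecoord n f g d m (Finsupp.single v k))
            + Finsupp.equivFunOnFinite.symm (Ecoord n f g d m b) := by
        ext j
        rw [Finsupp.add_apply, Finsupp.coe_equivFunOnFinite_symm,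
          Finsupp.coe_equivFunOnFinite_symm, Finsupp.coe_equivFunOnFinite_symm]
        exact Ecoord_add n f g d m _ _ j
      rw [hsplit, map_mul, ih, phi_monomial_single φ hx hy hym v k, hEadd, monomial_mul, one_mul]

end Phi

/-! ### Reindexing products over `Fin (n-1)` -/

lemma prod_castLE {n : ℕ} {M : Type*} [CommMonoid M] (m : Fin n) (hm : (m : ℕ) = n - 1)
    (h : Fin n → M) (pf : n - 1 ≤ n) :
    ∏ i : Fin (n-1), h (Fin.castLE pf i) = ∏ j ∈ univ.erase m, h j := by
  classical
  refine Finset.prod_bij' (fun i _ => Fin.castLE pf i)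
    (fun j hj => ⟨(j : ℕ), ?_⟩) ?_ ?_ ?_ ?_ ?_
  · have hjm : j ≠ m := (Finset.mem_erase.mp hj).1
    have : (j : ℕ) ≠ n - 1 := fun hh => hjm (Fin.ext (by rw [hh, hm]))
    have := j.isLt
    omega
  · intro i _
    refine Finset.mem_erase.mpr ⟨?_, Finset.mem_univ _⟩
    have : (i : ℕ) < n - 1 := i.isLt
    intro hh
    rw [← hh] at hm
    simp only [Fin.coe_castLE] at hm
    omega
  · intro j hj
    exact Finset.mem_univ _
  · intro i _
    apply Fin.ext
    rfl
  · intro j _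
    apply Fin.ext
    rfl
  · intro i _
    rfl

end SCI

open Finset in
/-- In the setting of the paper (`n ≥ 3`, coprime `f > g > 0`,
`(n-1)f ≤ ng`), if `K` is algebraically closed of characteristic zero, then `V` is not a
set-theoretic complete intersection on binomials: no `n` binomials `B₁, …, Bₙ` have the
zero set of `ker φ` as their set of common zeros in `K^{2n}`. -/
theorem stmt11 (n : ℕ) (hn : 3 ≤ n) (f g : ℕ) (hco : Nat.Coprime f g)
    (hg : 0 < g) (hgf : g < f) (hng : (n - 1) * f ≤ n * g)
    (K : Type*) [Field K] [IsAlgClosed K] [CharZero K]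
    (φ : MvPolynomial (Fin n ⊕ Fin n) K →ₐ[K] MvPolynomial (Fin n) K)
    (hφx : ∀ i : Fin n, φ (X (Sum.inl i)) = X i ^ (f * g))
    (hφy : ∀ i : Fin (n - 1), φ (X (Sum.inr (Fin.castLE (by omega) i))) =
      X (Fin.castLE (by omega) i : Fin n) ^ (f - g) * X (⟨n - 1, by omega⟩ : Fin n) ^ (f - g))
    (hφyn : φ (X (Sum.inr (⟨n - 1, by omega⟩ : Fin n))) =
      (∏ i : Fin (n - 1), X (Fin.castLE (by omega) i : Fin n) ^ g ^ 2) *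
        X (⟨n - 1, by omega⟩ : Fin n) ^ (g * ((n - 1) * g - (n - 2) * f))) :
    ¬ ∃ B : Fin n → MvPolynomial (Fin n ⊕ Fin n) K,
      (∀ i, IsBinomial (B i)) ∧
      {a : Fin n ⊕ Fin n → K | ∀ F ∈ RingHom.ker φ, eval a F = 0} =
        {a : Fin n ⊕ Fin n → K | ∀ i, eval a (B i) = 0} := by
  classical
  rintro ⟨B, hBbin, hset⟩
  -- numeric facts
  have hn1 : n - 1 < n := by omega
  set m : Fin n := ⟨n - 1, hn1⟩ with hmdef
  have key : (n - 2) * f < (n - 1) * g := by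
    obtain ⟨p, hp⟩ : ∃ p, n = p + 3 := ⟨n - 3, by omega⟩
    subst hp
    have hng' : (p + 2) * f ≤ (p + 3) * g := by
      have : p + 3 - 1 = p + 2 := by omega
      rwa [this] at hng
    have h2 : p + 3 - 2 = p + 1 := by omega
    have h1 : p + 3 - 1 = p + 2 := by omega
    rw [h2, h1]
    nlinarith [Nat.mul_le_mul_left (p + 1) hng', hg, hgf]
  set d := (n - 1) * g - (n - 2) * f with hddef
  have hd0 : d ≠ 0 := Nat.sub_ne_zero_of_lt key
  have hgd : g * d + (n - 2) * (f * g) = (n - 1) * g ^ 2 := by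
    rw [hddef]
    zify [key.le, show 1 ≤ n by omega, show 2 ≤ n by omega]
    ring
  have hfg0 : f * g ≠ 0 := Nat.mul_ne_zero (by omega) hg.ne'
  have hfmg : f - g ≠ 0 := Nat.sub_ne_zero_of_lt hgf
  have hm1 : (m : ℕ) = n - 1 := rfl
  set j0 : Fin n := ⟨0, by omega⟩ with hj0def
  set j1 : Fin n := ⟨1, by omega⟩ with hj1def
  have hj0m : j0 ≠ m := by
    intro hh
    have := congrArg Fin.val hh
    simp only [hj0def, hmdef] at this
    omega
  have hj1m : j1 ≠ m := by
    intro hh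
    have := congrArg Fin.val hh
    simp only [hj1def, hmdef] at this
    omega
  have hj01 : j0 ≠ j1 := by
    intro hh
    have := congrArg Fin.val hh
    simp only [hj0def, hj1def] at this
    omega
  have hex : ∀ a : Fin n, ∃ j'', j'' ≠ m ∧ j'' ≠ a := by
    intro a
    by_cases ha : a = j0
    · exact ⟨j1, hj1m, by rw [ha]; exact fun hh => hj01 hh.symm⟩
    · exact ⟨j0, hj0m, fun hh => ha hh.symm⟩
  -- clean forms of the φ-hypotheses
  have hx : ∀ i, φ (X (Sum.inl i)) = X i ^ (f * g) := hφx
  have hy : ∀ j : Fin n, j ≠ m → φ (X (Sum.inr j)) = X j ^ (f - g) * X m ^ (f - g) := by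
    intro j hj
    have hlt : (j : ℕ) < n - 1 := by
      have h1 := j.isLt
      have h2 : (j : ℕ) ≠ n - 1 := fun hh => hj (by
        apply Fin.ext
        rw [hh, hm1])
      omega
    have h2 := hφy ⟨(j : ℕ), hlt⟩
    have hc : ∀ pf : n - 1 ≤ n, (Fin.castLE pf (⟨(j : ℕ), hlt⟩ : Fin (n - 1)) : Fin n) = j :=
      fun pf => rfl
    rw [hc] at h2
    exact h2
  have hym : φ (X (Sum.inr m)) =
      (∏ j ∈ univ.erase m, X j ^ g ^ 2) * X m ^ (g * d) := by
    have h2 := hφyn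
    rw [SCI.prod_castLE m hm1 (fun j => (X j : MvPolynomial (Fin n) K) ^ g ^ 2) (by omega)] at h2
    exact h2
  haveI : Infinite K := Infinite.of_injective (Nat.cast : ℕ → K) Nat.cast_injective
  -- key evaluation identity
  have EVALKEY : ∀ (u : Fin n → K) (F : MvPolynomial (Fin n ⊕ Fin n) K),
      eval (fun v => eval u (φ (X v))) F = eval u (φ F) := by
    intro u F
    have h1 : (MvPolynomial.aeval (fun v => eval u (φ (X v))) :
        MvPolynomial (Fin n ⊕ Fin n) K →ₐ[K] K)
        = (MvPolynomial.aeval u : MvPolynomial (Fin n) K →ₐ[K] K).comp φ := by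
      apply MvPolynomial.algHom_ext
      intro v
      simp [SCI.aeval_eq_eval']
    have h2 := DFunLike.congr_fun h1 F
    simpa [SCI.aeval_eq_eval'] using h2
  -- every B i is in the kernel of φ
  have hker : ∀ i, φ (B i) = 0 := by
    intro i
    apply MvPolynomial.funext
    intro u
    have hmem : (fun v => eval u (φ (X v))) ∈
        {a : Fin n ⊕ Fin n → K | ∀ F ∈ RingHom.ker φ, eval a F = 0} := by
      intro F hF
      have hF0 : φ F = 0 := by rwa [RingHom.mem_ker] at hF
      rw [EVALKEY u F, hF0, map_zero]
    rw [hset] at hmem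
    have h3 := hmem i
    rw [EVALKEY u (B i)] at h3
    rw [h3, map_zero]
  -- binomial data
  choose ea eb hab hBdef using hBbin
  have hE : ∀ i t, SCI.Ecoord n f g d m (ea i) t = SCI.Ecoord n f g d m (eb i) t := by
    intro i
    have h1 := hker i
    rw [hBdef i, map_sub, SCI.phi_monomial φ hx hy hym, SCI.phi_monomial φ hx hy hym,
      sub_eq_zero] at h1
    have h2 := MvPolynomial.monomial_left_injective (one_ne_zero (α := K)) h1
    have h3 := Finsupp.equivFunOnFinite.symm.injective h2
    exact fun t => congrFun h3 t
  -- explicit kernel elements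
  have hkerF1 : ∀ j : Fin n, j ≠ m →
      φ ((X (Sum.inr j) : MvPolynomial (Fin n ⊕ Fin n) K) ^ (f * g)
        - (X (Sum.inl j) * X (Sum.inl m)) ^ (f - g)) = 0 := by
    intro j hj
    rw [map_sub, map_pow, map_pow, map_mul, hy j hj, hx j, hx m]
    rw [mul_pow, mul_pow, ← pow_mul, ← pow_mul, ← pow_mul, ← pow_mul,
      Nat.mul_comm (f * g) (f - g)]
    exact sub_self _
  have hkerF0 : φ ((X (Sum.inr m) : MvPolynomial (Fin n ⊕ Fin n) K) ^ f
      - (∏ i ∈ univ.erase m, (X (Sum.inl i) : MvPolynomial (Fin n ⊕ Fin n) K) ^ g)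
        * (X (Sum.inl m)) ^ d) = 0 := by
    rw [map_sub, map_pow, hym, map_mul, map_pow, map_prod, hx m]
    have hside : ((∏ j ∈ univ.erase m, (X j : MvPolynomial (Fin n) K) ^ g ^ 2)
        * X m ^ (g * d)) ^ f
        = (∏ i ∈ univ.erase m, φ ((X (Sum.inl i) : MvPolynomial (Fin n ⊕ Fin n) K) ^ g))
          * ((X m : MvPolynomial (Fin n) K) ^ (f * g)) ^ d := by
      rw [mul_pow, ← Finset.prod_pow]
      congr 1
      · apply Finset.prod_congr rfl
        intro j _
        rw [map_pow, hx j, ← pow_mul, ← pow_mul]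
        congr 1
        ring
      · rw [← pow_mul, ← pow_mul]
        congr 1
        ring
    rw [hside]
    exact sub_self _
  have hexp1 : (f - g) * g + g ^ 2 = f * g := by
    zify [hgf.le]
    ring
  have hexp2 : (n - 1) * ((f - g) * g) + g * d = f * g := by
    rw [hddef]
    zify [hgf.le, key.le, show 1 ≤ n by omega, show 2 ≤ n by omega]
    ring
  have hkerFs : φ ((∏ jj ∈ univ.erase m, (X (Sum.inr jj) : MvPolynomial (Fin n ⊕ Fin n) K) ^ g)
      * X (Sum.inr m) - ∏ i : Fin n, (X (Sum.inl i) : MvPolynomial (Fin n ⊕ Fin n) K)) = 0 := by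
    rw [map_sub, map_mul, map_prod, map_prod, hym]
    have hA : ∀ jj ∈ univ.erase m,
        φ ((X (Sum.inr jj) : MvPolynomial (Fin n ⊕ Fin n) K) ^ g)
          = X jj ^ ((f - g) * g) * X m ^ ((f - g) * g) := by
      intro jj hjj
      rw [map_pow, hy jj (Finset.mem_erase.mp hjj).1, mul_pow, ← pow_mul, ← pow_mul]
    rw [Finset.prod_congr rfl hA, Finset.prod_mul_distrib, Finset.prod_const,
      Finset.card_erase_of_mem (Finset.mem_univ m), Finset.card_univ, Fintype.card_fin]
    have hB : ∀ i ∈ (univ : Finset (Fin n)),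
        φ (X (Sum.inl i) : MvPolynomial (Fin n ⊕ Fin n) K) = X i ^ (f * g) :=
      fun i _ => hx i
    rw [Finset.prod_congr rfl hB]
    -- reassemble
    have lhs_eq : (∏ jj ∈ univ.erase m, (X jj : MvPolynomial (Fin n) K) ^ ((f - g) * g))
          * ((X m : MvPolynomial (Fin n) K) ^ ((f - g) * g)) ^ (n - 1)
          * ((∏ j ∈ univ.erase m, (X j : MvPolynomial (Fin n) K) ^ g ^ 2) * X m ^ (g * d))
        = ∏ i : Fin n, (X i : MvPolynomial (Fin n) K) ^ (f * g) := by
      rw [← pow_mul]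
      calc (∏ jj ∈ univ.erase m, (X jj : MvPolynomial (Fin n) K) ^ ((f - g) * g))
            * (X m : MvPolynomial (Fin n) K) ^ ((f - g) * g * (n - 1))
            * ((∏ j ∈ univ.erase m, (X j : MvPolynomial (Fin n) K) ^ g ^ 2) * X m ^ (g * d))
          = (∏ jj ∈ univ.erase m,
              ((X jj : MvPolynomial (Fin n) K) ^ ((f - g) * g) * X jj ^ g ^ 2))
            * (X m ^ ((f - g) * g * (n - 1)) * X m ^ (g * d)) := by
            rw [Finset.prod_mul_distrib]
            ring
        _ = (∏ jj ∈ univ.erase m, (X jj : MvPolynomial (Fin n) K) ^ (f * g))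
            * X m ^ (f * g) := by
            congr 1
            · apply Finset.prod_congr rfl
              intro jj _
              rw [← pow_add, hexp1]
            · rw [← pow_add]
              congr 1
              rw [← hexp2]
              ring
        _ = ∏ i : Fin n, (X i : MvPolynomial (Fin n) K) ^ (f * g) := by
            exact Finset.prod_erase_mul univ _ (Finset.mem_univ m)
    rw [lhs_eq]
    exact sub_self _
  -- Step C: for every j some B i has a pure y_j side
  have hq : ∀ j : Fin n, ∃ (i : Fin n) (l : ℕ) (b' : (Fin n ⊕ Fin n) →₀ ℕ), l ≠ 0 ∧
      ¬ b'.support ⊆ {Sum.inr j} ∧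
      (∀ t, SCI.Ecoord n f g d m (Finsupp.single (Sum.inr j) l) t
        = SCI.Ecoord n f g d m b' t) ∧
      ((B i = monomial (Finsupp.single (Sum.inr j) l) 1 - monomial b' 1) ∨
        (B i = monomial b' 1 - monomial (Finsupp.single (Sum.inr j) l) 1)) := by
    intro j
    have hnot : (fun v => if v = Sum.inr j then (1:K) else 0) ∉
        {a : Fin n ⊕ Fin n → K | ∀ F ∈ RingHom.ker φ, eval a F = 0} := by
      intro hin
      by_cases hjm : j = m
      · have h1 := hin _ (RingHom.mem_ker.mpr hkerF0)
        rw [map_sub, map_pow, map_mul, map_pow, map_prod, eval_X, eval_X] at h1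
        rw [hjm] at h1
        rw [if_pos rfl, if_neg (by simp), one_pow] at h1
        have hprod0 : (∏ i ∈ univ.erase m,
            eval (fun v => if v = Sum.inr m then (1:K) else 0) (X (Sum.inl i) ^ g)) = 0 := by
          refine Finset.prod_eq_zero (Finset.mem_erase.mpr ⟨hj0m, Finset.mem_univ j0⟩) ?_
          rw [map_pow, eval_X, if_neg (by simp)]
          exact zero_pow hg.ne'
        rw [hprod0] at h1
        simp at h1
      · have h1 := hin _ (RingHom.mem_ker.mpr (hkerF1 j hjm))
        rw [map_sub, map_pow, map_pow, map_mul, eval_X, eval_X, eval_X] at h1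
        rw [if_pos rfl, if_neg (by simp), if_neg (by simp), one_pow, zero_mul,
          zero_pow hfmg] at h1
        simp at h1
    rw [hset] at hnot
    have hex2 : ∃ i, eval (fun v => if v = Sum.inr j then (1:K) else 0) (B i) ≠ 0 := by
      by_contra hc
      push_neg at hc
      exact hnot hc
    obtain ⟨i, hi⟩ := hex2
    rw [hBdef i, map_sub, SCI.eval_monomial_indicator, SCI.eval_monomial_indicator] at hi
    by_cases h1 : (ea i).support ⊆ {Sum.inr j} <;> by_cases h2 : (eb i).support ⊆ {Sum.inr j}
    · rw [if_pos h1, if_pos h2, sub_self] at hi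
      exact absurd rfl hi
    · rw [Finsupp.support_subset_singleton] at h1
      refine ⟨i, (ea i) (Sum.inr j), eb i, ?_, h2, ?_, Or.inl ?_⟩
      · intro hl0
        have hea0 : ea i = 0 := by rw [h1, hl0, Finsupp.single_zero]
        have hEz : ∀ t, SCI.Ecoord n f g d m (eb i) t = 0 := by
          intro t
          rw [← hE i t, hea0]
          simp [SCI.Ecoord]
        have heb0 : eb i = 0 := SCI.eq_zero_of_Ecoord hg hgf hj0m hEz
        exact hab i (by rw [hea0, heb0])
      · intro t
        rw [← h1]
        exact hE i t
      · rw [hBdef i, ← h1]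
    · rw [Finsupp.support_subset_singleton] at h2
      refine ⟨i, (eb i) (Sum.inr j), ea i, ?_, h1, ?_, Or.inr ?_⟩
      · intro hl0
        have heb0 : eb i = 0 := by rw [h2, hl0, Finsupp.single_zero]
        have hEz : ∀ t, SCI.Ecoord n f g d m (ea i) t = 0 := by
          intro t
          rw [hE i t, heb0]
          simp [SCI.Ecoord]
        have hea0 : ea i = 0 := SCI.eq_zero_of_Ecoord hg hgf hj0m hEz
        exact hab i (by rw [hea0, heb0])
      · intro t
        rw [← h2]
        exact (hE i t).symm
      · rw [hBdef i, ← h2]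
    · rw [if_neg h1, if_neg h2, sub_self] at hi
      exact absurd rfl hi
  choose I L Bd hL hBsupp hEp hBeq using hq
  -- I is injective, hence bijective
  have hInj : Function.Injective I := by
    intro j j' hII
    by_contra hne'
    have hstj : Finsupp.single (Sum.inr j) (L j) ≠ Bd j := by
      intro hh
      exact hBsupp j (hh ▸ Finsupp.support_single_subset)
    have hstj' : Finsupp.single (Sum.inr j') (L j') ≠ Bd j' := by
      intro hh
      exact hBsupp j' (hh ▸ Finsupp.support_single_subset)
    have hsingle_ne : ∀ (a b : Fin n) (la lb : ℕ), la ≠ 0 → a ≠ b →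
        Finsupp.single (Sum.inr a) la ≠ (Finsupp.single (Sum.inr b) lb :
          (Fin n ⊕ Fin n) →₀ ℕ) := by
      intro a b la lb hla hab hcontra
      rcases (Finsupp.single_eq_single_iff _ _ _ _).mp hcontra with ⟨hv, _⟩ | ⟨hl0, _⟩
      · exact hab (Sum.inr.inj hv)
      · exact hla hl0
    have e1 := hBeq j
    have e2 := hBeq j'
    rw [hII] at e1
    rcases e1 with e1 | e1 <;> rcases e2 with e2 | e2
    · obtain ⟨hs, ht⟩ := SCI.binom_eq_binom (e1.symm.trans e2) hstj
      exact hsingle_ne j j' (L j) (L j') (hL j) hne' hs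
    · obtain ⟨hs, ht⟩ := SCI.binom_eq_binom (e1.symm.trans e2) hstj
      refine SCI.cross_impossible (d := d) hg hgf hne' (hL j) (hL j') hex ?_
      intro t
      have hh := hEp j t
      rw [ht] at hh
      exact hh
    · obtain ⟨hs, ht⟩ := SCI.binom_eq_binom (e1.symm.trans e2) (fun hh => hstj hh.symm)
      refine SCI.cross_impossible (d := d) hg hgf hne' (hL j) (hL j') hex ?_
      intro t
      have hh := hEp j t
      rw [hs] at hh
      exact hh
    · obtain ⟨hs, ht⟩ := SCI.binom_eq_binom (e1.symm.trans e2) (fun hh => hstj hh.symm)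
      exact hsingle_ne j j' (L j) (L j') (hL j) hne' ht
  have hSurj : Function.Surjective I := Finite.injective_iff_surjective.mp hInj
  -- the distinguished binomial at m
  have hbne : Bd m ≠ Finsupp.single (Sum.inr m) (L m) := by
    intro hh
    exact hBsupp m (hh ▸ Finsupp.support_single_subset)
  have hγk : (Bd m) (Sum.inr m) < L m :=
    SCI.lt_of_m_binomial hg hgf hj0m (Bd m) hbne (hEp m)
  by_cases hk1 : L m - (Bd m) (Sum.inr m) = 1
  · -- arithmetic contradiction
    have hkγ : L m = (Bd m) (Sum.inr m) + 1 := by omega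
    have hgg : g ^ 2 < f * g := by
      have h1 : g * g < f * g := (Nat.mul_lt_mul_right hg).mpr hgf
      calc g ^ 2 = g * g := sq g
        _ < f * g := h1
    have hsub : ∀ j : Fin n, j ≠ m →
        (Bd m) (Sum.inl j) = 0 ∧ (Bd m) (Sum.inr j) * (f - g) = g ^ 2 := by
      intro j hj
      have hh := hEp m j
      rw [SCI.Ecoord_single_inrm, if_neg hj, SCI.Ecoord_apply_ne n f g d m _ hj, hkγ,
        add_mul, one_mul] at hh
      have hXY : (Bd m) (Sum.inl j) * (f * g) + (Bd m) (Sum.inr j) * (f - g) = g ^ 2 := by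
        omega
      have hX0 : (Bd m) (Sum.inl j) = 0 := by
        by_contra hpos
        have h1 : 1 ≤ (Bd m) (Sum.inl j) := Nat.one_le_iff_ne_zero.mpr hpos
        have h2 : f * g ≤ (Bd m) (Sum.inl j) * (f * g) :=
          Nat.le_mul_of_pos_left (f * g) h1
        omega
      rw [hX0, zero_mul, zero_add] at hXY
      exact ⟨hX0, hXY⟩
    have hsum : (∑ i ∈ univ.erase m, (Bd m) (Sum.inr i)) * (f - g) = (n - 1) * g ^ 2 := by
      rw [Finset.sum_mul]
      have hcong : ∀ i ∈ univ.erase m, (Bd m) (Sum.inr i) * (f - g) = g ^ 2 :=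
        fun i hi => (hsub i (Finset.mem_erase.mp hi).1).2
      rw [Finset.sum_congr rfl hcong, Finset.sum_const,
        Finset.card_erase_of_mem (Finset.mem_univ m), Finset.card_univ, Fintype.card_fin,
        smul_eq_mul]
    have hh := hEp m m
    rw [SCI.Ecoord_single_inrm, if_pos rfl, SCI.Ecoord_apply_m, hsum, hkγ, add_mul,
      one_mul] at hh
    have hnfg : (n - 2) * (f * g) = 0 := by omega
    rcases Nat.mul_eq_zero.mp hnfg with hc | hc
    · omega
    · exact hfg0 hc
  · -- root of unity contradiction
    have hk2 : 2 ≤ L m - (Bd m) (Sum.inr m) := by omega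
    haveI : NeZero ((L m - (Bd m) (Sum.inr m) : ℕ) : K) :=
      ⟨Nat.cast_ne_zero.mpr (by omega)⟩
    obtain ⟨ζ, hζ⟩ := HasEnoughRootsOfUnity.exists_primitiveRoot K (L m - (Bd m) (Sum.inr m))
    have hζk : ζ ^ (L m - (Bd m) (Sum.inr m)) = 1 := hζ.pow_eq_one
    have hζ1 : ζ ≠ 1 := by
      intro hh
      rw [hh] at hζ
      have := hζ.eq_orderOf
      rw [orderOf_one] at this
      omega
    set z : Fin n ⊕ Fin n → K := fun v => if v = Sum.inr m then ζ else 1 with hzdef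
    have hzmem : z ∈ {a : Fin n ⊕ Fin n → K | ∀ i, eval a (B i) = 0} := by
      intro i
      obtain ⟨j, hj⟩ := hSurj i
      rw [← hj]
      by_cases hjm : j = m
      · have hζkγ : ζ ^ (L m) = ζ ^ ((Bd m) (Sum.inr m)) := by
          have hsplit : L m = (Bd m) (Sum.inr m) + (L m - (Bd m) (Sum.inr m)) := by omega
          rw [hsplit, pow_add, hζk, mul_one]
        rcases hBeq j with e | e <;>
          rw [e, map_sub, SCI.eval_monomial_zeta, SCI.eval_monomial_zeta, hjm,
            Finsupp.single_eq_same]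
        · rw [hζkγ, sub_self]
        · rw [hζkγ, sub_self]
      · have hbm0 : (Bd j) (Sum.inr m) = 0 :=
          SCI.inrm_eq_zero_of hg hjm hex (L j) (Bd j) (hEp j)
        have hsm0 : (Finsupp.single (Sum.inr j) (L j) : (Fin n ⊕ Fin n) →₀ ℕ)
            (Sum.inr m) = 0 :=
          Finsupp.single_eq_of_ne' (by simp [hjm])
        rcases hBeq j with e | e <;>
          rw [e, map_sub, SCI.eval_monomial_zeta, SCI.eval_monomial_zeta, hbm0, hsm0,
            sub_self]
    rw [← hset] at hzmem
    have hFs := hzmem _ (RingHom.mem_ker.mpr hkerFs)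
    rw [map_sub, map_mul, map_prod, map_prod, eval_X] at hFs
    have hpr1 : (∏ jj ∈ univ.erase m,
        eval z ((X (Sum.inr jj) : MvPolynomial (Fin n ⊕ Fin n) K) ^ g)) = 1 := by
      apply Finset.prod_eq_one
      intro jj hjj
      rw [map_pow, eval_X]
      simp only [hzdef]
      rw [if_neg (by simp [(Finset.mem_erase.mp hjj).1])]
      exact one_pow g
    have hpr2 : (∏ i : Fin n,
        eval z (X (Sum.inl i) : MvPolynomial (Fin n ⊕ Fin n) K)) = 1 := by
      apply Finset.prod_eq_one
      intro i _
      rw [eval_X]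
      simp only [hzdef]
      rw [if_neg (by simp)]
    rw [hpr1, hpr2, one_mul] at hFs
    have hzm : z (Sum.inr m) = ζ := by simp [hzdef]
    rw [hzm] at hFs
    exact hζ1 (by rwa [sub_eq_zero] at hFs)
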